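/- arXiv:1505.03395 — 4 statements merged into one kernel-verified Lean document; each statement's English description precedes it below -/
import Mathlib

section
/- Let κ < μ < λ be infinite regular cardinals. The forcing 𝕊^λ_{κ,μ}, whose conditions are functions s : (γ_s + 1) → 2 with γ_s < λ such that the set {α ≤ γ_s : s(α) = 1} is contained in the points of λ of cofinality κ and is non-stationary in β for every β ≤ γ_s of cofinality at least μ, ordered by reverse inclusion, is μ-directed closed. -/
/-!
The lower bound is the union r of the conditions in D: its height γ_r is the supremum of their
heights, which stays below λ by regularity of λ. Directedness makes the conditions agree on
common initial segments, so r extends each of them, and below the height of any p ∈ D the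
set coded by r is that of p, which is non-stationary by assumption. The only ordinal ≤ γ_r not
covered this way is γ_r itself when the supremum is not attained; but then cf(γ_r) ≤ |D| < μ,
so no stationarity requirement applies there.
-/

/-- A is unbounded in β. -/
def unbIn (A : Set Ordinal) (β : Ordinal) : Prop :=
  ∀ α < β, ∃ γ ∈ A, α ≤ γ ∧ γ < β

/-- A is closed in β: it contains each of its limit points below β. -/
def closedIn (A : Set Ordinal) (β : Ordinal) : Prop :=
  ∀ δ < β, Order.IsSuccLimit δ → unbIn A δ → δ ∈ A

/-- A is a club (closed unbounded subset) in β. -/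
def clubIn (A : Set Ordinal) (β : Ordinal) : Prop :=
  A ⊆ Set.Iio β ∧ unbIn A β ∧ closedIn A β

/-- S is stationary in β: S meets every club in β. -/
def statIn (S : Set Ordinal) (β : Ordinal) : Prop :=
  ∀ C : Set Ordinal, clubIn C β → (S ∩ C).Nonempty

/-- A condition of the forcing 𝕊^λ_{κ,μ}, represented as a pair p = (γ_p, A_p) coding the
function s : (γ_p + 1) → 2 with A_p = {α ≤ γ_p : s(α) = 1}: we require γ_p < λ, that A_p
consists of ordinals ≤ γ_p of cofinality κ, and that A_p is non-stationary in every
β ≤ γ_p of cofinality at least μ. -/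
def SCond (lam kap mu : Cardinal) (p : Ordinal × Set Ordinal) : Prop :=
  p.1 < lam.ord ∧ (∀ α ∈ p.2, α ≤ p.1 ∧ α.cof = kap) ∧
  ∀ β ≤ p.1, mu ≤ β.cof → ¬ statIn p.2 β

/-- The ordering of 𝕊^λ_{κ,μ} (reverse inclusion of the corresponding functions):
q ≤ p iff the function coded by q extends the function coded by p. -/
def SLe (q p : Ordinal × Set Ordinal) : Prop :=
  p.1 ≤ q.1 ∧ q.2 ∩ Set.Iic p.1 = p.2

open Cardinal Set

universe u v

theorem statIn.mono_of_inter_Iio_subset {S T : Set Ordinal} {β : Ordinal}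
    (hST : S ∩ Iio β ⊆ T) (hS : statIn S β) : statIn T β := by
  intro C hC
  obtain ⟨α, hαS, hαC⟩ := hS C hC
  exact ⟨α, hST ⟨hαS, hC.1 hαC⟩, hαC⟩

theorem Ordinal.lift_cof_iSup_le_of_forall_lt {β : Type v} {f : β → Ordinal.{u}}
    (hf : ∀ i, f i < ⨆ i, f i) : Cardinal.lift.{v} (⨆ i, f i).cof ≤ Cardinal.lift.{u} #β := by
  by_contra! h
  rw [Ordinal.lift_cof] at h
  exact (Ordinal.lift_iSup_lt_of_lt_cof h hf).false

noncomputable def SUnion (D : Set (Ordinal × Set Ordinal)) : Ordinal × Set Ordinal :=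
  (⨆ p : D, p.1.1, ⋃ p ∈ D, p.2)

section Directed

variable {D : Set (Ordinal × Set Ordinal)}

theorem mem_of_directedOn_SLe (hD : DirectedOn (Function.swap SLe) D)
    {p q : Ordinal × Set Ordinal} (hp : p ∈ D) (hq : q ∈ D) {α : Ordinal}
    (hαq : α ∈ q.2) (hαp : α ≤ p.1) : α ∈ p.2 := by
  obtain ⟨r, -, ⟨-, hrp⟩, ⟨-, hrq⟩⟩ := hD p hp q hq
  rw [← hrq] at hαq
  rw [← hrp]
  exact ⟨hαq.1, hαp⟩

theorem SUnion_snd_inter_Iic (hD : DirectedOn (Function.swap SLe) D)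
    {p : Ordinal × Set Ordinal} (hp : p ∈ D) (hp_le : ∀ α ∈ p.2, α ≤ p.1) :
    (SUnion D).2 ∩ Iic p.1 = p.2 := by
  ext α
  simp only [SUnion, mem_inter_iff, mem_iUnion, mem_Iic]
  constructor
  · rintro ⟨⟨q, hq, hαq⟩, hαp⟩
    exact mem_of_directedOn_SLe hD hp hq hαq hαp
  · exact fun hαp ↦ ⟨⟨p, hp, hαp⟩, hp_le α hαp⟩

theorem le_SUnion_fst (hbdd : BddAbove (Prod.fst '' D)) {p : Ordinal × Set Ordinal}
    (hp : p ∈ D) : p.1 ≤ (SUnion D).1 := by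
  refine le_ciSup (f := fun q : D ↦ q.1.1) ?_ ⟨p, hp⟩
  rwa [← image_eq_range]

theorem SLe_SUnion (hD : DirectedOn (Function.swap SLe) D)
    (hbdd : BddAbove (Prod.fst '' D)) {p : Ordinal × Set Ordinal} (hp : p ∈ D)
    (hp_le : ∀ α ∈ p.2, α ≤ p.1) : SLe (SUnion D) p :=
  ⟨le_SUnion_fst hbdd hp, SUnion_snd_inter_Iic hD hp hp_le⟩

end Directed

section Forcing

variable {kap mu lam : Cardinal} {D : Set (Ordinal × Set Ordinal)}

theorem SCond.le_fst {p : Ordinal × Set Ordinal} (hp : SCond lam kap mu p) :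
    ∀ α ∈ p.2, α ≤ p.1 :=
  fun α hα ↦ (hp.2.1 α hα).1

theorem bddAbove_fst_of_SCond (hDcond : ∀ p ∈ D, SCond lam kap mu p) :
    BddAbove (Prod.fst '' D) :=
  ⟨lam.ord, forall_mem_image.2 fun p hp ↦ (hDcond p hp).1.le⟩

theorem SUnion_fst_lt (hl : lam.IsRegular) (hDsize : #D < Cardinal.lift.{1, 0} lam)
    (hDlt : ∀ p ∈ D, p.1 < lam.ord) : (SUnion D).1 < lam.ord := by
  refine Ordinal.lift_iSup_lt_of_lt_cof ?_ fun p ↦ hDlt p.1 p.2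
  rwa [← Ordinal.lift_cof, hl.cof_ord, Cardinal.lift_uzero]

theorem SUnion_fst_eq_of_forall_lt {β : Ordinal} (hβ : β ≤ (SUnion D).1)
    (hDβ : ∀ p ∈ D, p.1 < β) : β = (SUnion D).1 :=
  hβ.antisymm (Ordinal.iSup_le fun p ↦ (hDβ p.1 p.2).le)

theorem not_statIn_SUnion (hD : DirectedOn (Function.swap SLe) D)
    (hDcond : ∀ p ∈ D, SCond lam kap mu p) (hDsize : #D < Cardinal.lift.{1, 0} mu)
    {β : Ordinal} (hβ : β ≤ (SUnion D).1) (hβcof : mu ≤ β.cof) :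
    ¬ statIn (SUnion D).2 β := by
  by_cases hDβ : ∃ p ∈ D, β ≤ p.1
  · obtain ⟨p, hp, hβp⟩ := hDβ
    refine fun hstat ↦ (hDcond p hp).2.2 β hβp hβcof (hstat.mono_of_inter_Iio_subset ?_)
    rintro α ⟨hα, hαβ⟩
    rw [← SUnion_snd_inter_Iic hD hp (hDcond p hp).le_fst]
    exact ⟨hα, (mem_Iio.1 hαβ).le.trans hβp⟩
  · push Not at hDβ
    have hβsup := SUnion_fst_eq_of_forall_lt hβ hDβ
    have hcof : Cardinal.lift.{1} (SUnion D).1.cof ≤ #D := by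
      refine (Ordinal.lift_cof_iSup_le_of_forall_lt (f := fun p : D ↦ p.1.1) fun p ↦ ?_).trans_eq
        (lift_uzero _)
      exact (hDβ p.1 p.2).trans_eq hβsup
    rw [← hβsup] at hcof
    exact absurd ((Cardinal.lift_le.2 hβcof).trans hcof) hDsize.not_ge

theorem SCond_SUnion (hl : lam.IsRegular) (hml : mu < lam)
    (hD : DirectedOn (Function.swap SLe) D) (hDcond : ∀ p ∈ D, SCond lam kap mu p)
    (hDsize : #D < Cardinal.lift.{1, 0} mu) : SCond lam kap mu (SUnion D) := by
  refine ⟨SUnion_fst_lt hl (hDsize.trans (Cardinal.lift_lt.2 hml)) fun p hp ↦ (hDcond p hp).1,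
    ?_, fun β hβ hβcof ↦ not_statIn_SUnion hD hDcond hDsize hβ hβcof⟩
  simp only [SUnion, mem_iUnion]
  rintro α ⟨p, hp, hαp⟩
  obtain ⟨hαle, hαcof⟩ := (hDcond p hp).2.1 α hαp
  exact ⟨hαle.trans (le_SUnion_fst (bddAbove_fst_of_SCond hDcond) hp), hαcof⟩

end Forcing

theorem stmt4_general (kap mu lam : Cardinal)
    (hl : lam.IsRegular)
    (hml : mu < lam)
    (D : Set (Ordinal × Set Ordinal))
    (hDcond : ∀ p ∈ D, SCond lam kap mu p)
    (hDdir : ∀ p ∈ D, ∀ q ∈ D, ∃ r ∈ D, SLe r p ∧ SLe r q)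
    (hDsize : Cardinal.mk ↥D < Cardinal.lift.{1, 0} mu) :
    ∃ r : Ordinal × Set Ordinal, SCond lam kap mu r ∧ ∀ p ∈ D, SLe r p := by
  exact ⟨SUnion D, SCond_SUnion hl hml hDdir hDcond hDsize, fun p hp ↦
    SLe_SUnion hDdir (bddAbove_fst_of_SCond hDcond) hp (hDcond p hp).le_fst⟩

/-- For infinite regular cardinals κ < μ < λ, the forcing 𝕊^λ_{κ,μ} is μ-directed
closed: every directed set of conditions of size < μ has a lower bound. -/
theorem stmt4 (kap mu lam : Cardinal)
    (hk : kap.IsRegular) (hm : mu.IsRegular) (hl : lam.IsRegular)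
    (hkm : kap < mu) (hml : mu < lam)
    (D : Set (Ordinal × Set Ordinal))
    (hDcond : ∀ p ∈ D, SCond lam kap mu p)
    (hDdir : ∀ p ∈ D, ∀ q ∈ D, ∃ r ∈ D, SLe r p ∧ SLe r q)
    (hDsize : Cardinal.mk ↥D < Cardinal.lift.{1, 0} mu) :
    ∃ r : Ordinal × Set Ordinal, SCond lam kap mu r ∧ ∀ p ∈ D, SLe r p :=
  stmt4_general kap mu lam hl hml D hDcond hDdir hDsize
end

section
/- Let λ be a regular uncountable cardinal with λ^{<λ} = λ, and let a⃗ = ⟨a_α : α < λ⟩ be a fixed enumeration of all bounded subsets of λ. Then for B ⊆ λ, B ∈ I[λ] if and only if there is a club C ⊆ λ such that every element of B ∩ C is approachable with respect to a⃗. -/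
/-- a is a bounded subset of λ. -/
def bddSubset (lam : Cardinal) (a : Set Ordinal) : Prop :=
  ∃ β < lam.ord, a ⊆ Set.Iio β

/-- The order type of a set of ordinals. -/
noncomputable def otp (A : Set Ordinal) : Ordinal.{1} :=
  Ordinal.type (Subrel ((· < ·) : Ordinal → Ordinal → Prop) (· ∈ A))

/-- γ is approachable with respect to the sequence a⃗ = ⟨a_α⟩: there is an unbounded
A ⊆ γ of order type cf(γ) all of whose proper initial segments appear as some a_α with
α < γ. -/
def ApproachableWrt (a : Ordinal → Set Ordinal) (γ : Ordinal) : Prop :=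
  ∃ A : Set Ordinal, A ⊆ Set.Iio γ ∧ unbIn A γ ∧
    otp A = Ordinal.lift.{1, 0} γ.cof.ord ∧
    ∀ β < γ, ∃ α < γ, A ∩ Set.Iio β = a α

/-- B belongs to the approachability ideal I[λ]: B ⊆ λ and there are a club C ⊆ λ and a
sequence a⃗ of bounded subsets of λ such that every element of B ∩ C is approachable with
respect to a⃗. -/
def InApproachIdeal (lam : Cardinal) (B : Set Ordinal) : Prop :=
  B ⊆ Set.Iio lam.ord ∧
  ∃ (C : Set Ordinal) (a : Ordinal → Set Ordinal),
    clubIn C lam.ord ∧ (∀ α, bddSubset lam (a α)) ∧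
    ∀ γ ∈ B ∩ C, ApproachableWrt a γ

/-!
Given any sequence b⃗ of bounded subsets of λ witnessing B ∈ I[λ], the enumeration a⃗ yields an
index map f : λ → λ with a_{f(α)} = b_α. Below a closure point γ of f every index α < γ is
replaced by f(α) < γ, so an approach witness for b⃗ at γ is one for a⃗. Since λ is regular and
uncountable, the closure points of f meet every club of λ in a club.
-/

open Set Ordinal Cardinal Order

def IsClosedUnder (f : Ordinal → Ordinal) (δ : Ordinal) : Prop :=
  ∀ ξ < δ, f ξ < δ

theorem unbIn.mono {A A' : Set Ordinal} {β : Ordinal} (h : unbIn A β) (hA : A ⊆ A') :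
    unbIn A' β := fun α hα =>
  let ⟨γ, hγ, hαγ, hγβ⟩ := h α hα
  ⟨γ, hA hγ, hαγ, hγβ⟩

theorem exists_isClosedUnder_between {lam : Cardinal} (hreg : lam.IsRegular) (hunc : ℵ₀ < lam)
    {f : Ordinal → Ordinal} (hf : ∀ ξ < lam.ord, f ξ < lam.ord) {α : Ordinal}
    (hα : α < lam.ord) : ∃ δ < lam.ord, α < δ ∧ IsClosedUnder f δ := by
  -- a fixed point of `g` above `α` is closed under `f`
  let g : Ordinal → Ordinal := fun x => ⨆ ξ : Iio x, f ξ + 1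
  have hg : ∀ x < lam.ord, g x < lam.ord := fun x hx => by
    apply lift_iSup_add_one_lt_of_lt_cof
    · rwa [← lift_cof, hreg.cof_ord, Cardinal.mk_Iio_ordinal, Cardinal.lift_lift,
        Cardinal.lift_lt, ← lt_ord]
    · exact fun ξ => hf ξ (ξ.2.trans hx)
  refine ⟨nfp g (α + 1),
    nfp_lt_ord_of_isRegular hreg hunc.ne' hg ((isSuccLimit_ord hreg.aleph0_le).add_one_lt hα),
    (lt_add_one α).trans_le (le_nfp _ _), fun ξ hξ => ?_⟩
  obtain ⟨n, hn⟩ := lt_nfp_iff.1 hξ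
  calc f ξ < f ξ + 1 := lt_add_one _
    _ ≤ g (g^[n] (α + 1)) := le_ciSup Ordinal.bddAbove_of_small (⟨ξ, hn⟩ : Iio _)
    _ = g^[n + 1] (α + 1) := (Function.iterate_succ_apply' _ _ _).symm
    _ ≤ nfp g (α + 1) := iterate_le_nfp _ _ _

theorem IsClosedUnder.isSuccLimit {f : Ordinal → Ordinal} {δ : Ordinal} (hδ : IsClosedUnder f δ)
    (hf : ∀ ξ < δ, ξ < f ξ) (h0 : δ ≠ 0) : IsSuccLimit δ := by
  rw [Ordinal.isSuccLimit_iff]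
  exact ⟨h0, isSuccPrelimit_of_succ_lt fun ξ hξ => (succ_le_of_lt (hf ξ hξ)).trans_lt (hδ ξ hξ)⟩

theorem closedIn_setOf_isClosedUnder (f : Ordinal → Ordinal) (β : Ordinal) :
    closedIn {δ | IsClosedUnder f δ} β := by
  intro δ _ hlim hunb ξ hξ
  obtain ⟨γ, hγ, hξγ, hγδ⟩ := hunb (succ ξ) (hlim.succ_lt hξ)
  exact (hγ ξ ((lt_succ ξ).trans_le hξγ)).trans hγδ

theorem clubIn.inter_setOf_isClosedUnder {lam : Cardinal} (hreg : lam.IsRegular)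
    (hunc : ℵ₀ < lam) {C : Set Ordinal} (hC : clubIn C lam.ord) {f : Ordinal → Ordinal}
    (hf : ∀ ξ < lam.ord, f ξ < lam.ord) : clubIn (C ∩ {δ | IsClosedUnder f δ}) lam.ord := by
  obtain ⟨hCsub, hCunb, hCclosed⟩ := hC
  refine ⟨fun _ h => hCsub h.1, fun α hα => ?_, fun δ hδ hlim hunb =>
    ⟨hCclosed δ hδ hlim (hunb.mono inter_subset_left),
      closedIn_setOf_isClosedUnder f _ δ hδ hlim (hunb.mono inter_subset_right)⟩⟩
  have hnext : ∀ ξ < lam.ord, ∃ c ∈ C, ξ < c := fun ξ hξ =>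
    let ⟨c, hc, hξc, _⟩ := hCunb (succ ξ) ((isSuccLimit_ord hreg.aleph0_le).succ_lt hξ)
    ⟨c, hc, succ_le_iff.1 hξc⟩
  choose! next hnextC hnext using hnext
  -- closure under `next` makes `δ` a limit point of `C`
  obtain ⟨δ, hδlt, hαδ, hδ⟩ := exists_isClosedUnder_between hreg hunc
    (f := fun ξ => max (f ξ) (next ξ)) (fun ξ hξ => max_lt (hf ξ hξ) (hCsub (hnextC ξ hξ))) hα
  have hnextδ : ∀ ξ < δ, next ξ < δ := fun ξ hξ => (le_max_right _ _).trans_lt (hδ ξ hξ)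
  have hlim : IsSuccLimit δ := hδ.isSuccLimit
    (fun ξ hξ => (hnext ξ (hξ.trans hδlt)).trans_le (le_max_right _ _)) (ne_bot_of_gt hαδ)
  have hCδ : δ ∈ C := hCclosed δ hδlt hlim fun ξ hξ =>
    ⟨next ξ, hnextC ξ (hξ.trans hδlt), (hnext ξ (hξ.trans hδlt)).le, hnextδ ξ hξ⟩
  exact ⟨δ, ⟨hCδ, fun ξ hξ => (le_max_left _ _).trans_lt (hδ ξ hξ)⟩, hαδ.le, hδlt⟩

theorem ApproachableWrt.of_forall_exists_eq {a b : Ordinal → Set Ordinal} {γ : Ordinal}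
    (h : ApproachableWrt b γ) (hba : ∀ α < γ, ∃ α' < γ, a α' = b α) : ApproachableWrt a γ := by
  obtain ⟨A, hAsub, hAunb, hAotp, hAinit⟩ := h
  refine ⟨A, hAsub, hAunb, hAotp, fun β hβ => ?_⟩
  obtain ⟨α, hαγ, hα⟩ := hAinit β hβ
  obtain ⟨α', hα'γ, hα'⟩ := hba α hαγ
  exact ⟨α', hα'γ, hα.trans hα'.symm⟩

theorem stmt8_general (lam : Cardinal) (hreg : lam.IsRegular) (hunc : Cardinal.aleph0 < lam)
    (a : Ordinal → Set Ordinal)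
    (hbdd : ∀ α, bddSubset lam (a α))
    (henum : ∀ b : Set Ordinal, bddSubset lam b → ∃ α < lam.ord, a α = b) :
    ∀ B : Set Ordinal, B ⊆ Set.Iio lam.ord →
      (InApproachIdeal lam B ↔
        ∃ C : Set Ordinal, clubIn C lam.ord ∧ ∀ γ ∈ B ∩ C, ApproachableWrt a γ) := by
  intro B hB
  constructor
  · rintro ⟨-, C, b, hC, hb, happ⟩
    choose f hflt hfeq using fun α => henum (b α) (hb α)
    refine ⟨C ∩ {δ | IsClosedUnder f δ}, hC.inter_setOf_isClosedUnder hreg hunc fun ξ _ => hflt ξ,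
      ?_⟩
    rintro γ ⟨hγB, hγC, hγf⟩
    exact (happ γ ⟨hγB, hγC⟩).of_forall_exists_eq fun α hα => ⟨f α, hγf α hα, hfeq α⟩
  · rintro ⟨C, hC, happ⟩
    exact ⟨hB, C, a, hC, hbdd, happ⟩

/-- Let λ be regular uncountable with λ^{<λ} = λ, and let a⃗ be a fixed enumeration of
all bounded subsets of λ.  Then for B ⊆ λ, B ∈ I[λ] if and only if there is a club C ⊆ λ
such that every element of B ∩ C is approachable with respect to a⃗. -/
theorem stmt8 (lam : Cardinal) (hreg : lam.IsRegular) (hunc : Cardinal.aleph0 < lam)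
    (hpow : lam ^< lam = lam)
    (a : Ordinal → Set Ordinal)
    (hbdd : ∀ α, bddSubset lam (a α))
    (henum : ∀ b : Set Ordinal, bddSubset lam b → ∃ α < lam.ord, a α = b) :
    ∀ B : Set Ordinal, B ⊆ Set.Iio lam.ord →
      (InApproachIdeal lam B ↔
        ∃ C : Set Ordinal, clubIn C lam.ord ∧ ∀ γ ∈ B ∩ C, ApproachableWrt a γ) :=
  stmt8_general lam hreg hunc a hbdd henum
end

section
/- Let κ be a singular strong limit cardinal of countable cofinality. Then there exists a normal, subadditive function d : [κ⁺]² → ω. -/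
/-!
Since `cf κ = ω`, there are ordinals `s 0 ≤ s 1 ≤ ⋯ < κ` with supremum `κ`; each has
size `< κ`. Fix injections `e_β : β → κ` for `β < κ⁺` and let `α ≺ₙ β` mean
`α < β ∧ e_β α < s n`. Put `d(α, β)` = the least `n` such that `α` reaches `β` by a finite
`≺ₙ`-chain. Subadditivity is just concatenation of chains (the relations `≺ₙ` increase with `n`).
For normality, every point has fewer than `κ` immediate `≺ₙ`-predecessors, uniformly, so, `κ`
being uncountable, it also has fewer than `κ` points below it in the transitive closure.
-/

/-- d : [κ⁺]² → ω is normal: for every β < κ⁺ and n < ω, the set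
{α < β : d(α,β) ≤ n} has cardinality less than κ. -/
def NormalFn (kap : Cardinal) (d : Ordinal → Ordinal → ℕ) : Prop :=
  ∀ β < (Order.succ kap).ord, ∀ n : ℕ,
    Cardinal.mk {α : Ordinal // α < β ∧ d α β ≤ n} < Cardinal.lift.{1, 0} kap

/-- d : [κ⁺]² → ω is subadditive: d(α,γ) ≤ max(d(α,β), d(β,γ)) for α < β < γ < κ⁺. -/
def SubadditiveFn (kap : Cardinal) (d : Ordinal → Ordinal → ℕ) : Prop :=
  ∀ α β γ : Ordinal, α < β → β < γ → γ < (Order.succ kap).ord →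
    d α γ ≤ max (d α β) (d β γ)

universe u

open Cardinal Order Relation Set

namespace Relation

variable {α : Type*}

def iterPreds (r : α → α → Prop) (b : α) : ℕ → Set α
  | 0 => {a | r a b}
  | k + 1 => ⋃ c ∈ iterPreds r b k, {a | r a c}

theorem TransGen.exists_mem_iterPreds {r : α → α → Prop} {a b : α} (h : TransGen r a b) :
    ∃ k, a ∈ iterPreds r b k := by
  induction h using TransGen.head_induction_on with
  | single hab => exact ⟨0, hab⟩
  | head hac _ ih =>
    obtain ⟨k, hk⟩ := ih
    exact ⟨k + 1, mem_biUnion hk hac⟩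

variable {α : Type u} {r : α → α → Prop} {ℓ : Cardinal.{u}}

theorem mk_iterPreds_le (hℓ : ℵ₀ ≤ ℓ) (hr : ∀ b, #{a | r a b} ≤ ℓ) (b : α) (k : ℕ) :
    #(iterPreds r b k) ≤ ℓ := by
  induction k with
  | zero => exact hr b
  | succ k ih =>
    calc #(iterPreds r b (k + 1))
        ≤ #(iterPreds r b k) * ⨆ c : iterPreds r b k, #{a | r a c} := mk_biUnion_le _ _
      _ ≤ ℓ * ℓ := mul_le_mul' ih (ciSup_le' fun c => hr c)
      _ = ℓ := mul_eq_self hℓ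

theorem mk_setOf_transGen_le (hℓ : ℵ₀ ≤ ℓ) (hr : ∀ b, #{a | r a b} ≤ ℓ) (b : α) :
    #{a | TransGen r a b} ≤ ℓ := by
  have hsub : {a | TransGen r a b} ⊆ ⋃ k, iterPreds r b k := fun a h =>
    mem_iUnion.mpr h.exists_mem_iterPreds
  have hunion := mk_iUnion_le_lift (iterPreds r b)
  simp only [lift_uzero, mk_nat, lift_aleph0] at hunion
  calc #{a | TransGen r a b} ≤ #(⋃ k, iterPreds r b k) := mk_le_mk_of_subset hsub
    _ ≤ ℵ₀ * ⨆ k, #(iterPreds r b k) := hunion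
    _ ≤ ℓ * ℓ := mul_le_mul' hℓ (ciSup_le' (mk_iterPreds_le hℓ hr b))
    _ = ℓ := mul_eq_self hℓ

end Relation

section LevelDist

variable {α : Type*} (r : ℕ → α → α → Prop)

/-- `0` when no level connects `a` to `b`. -/
noncomputable def levelDist (a b : α) : ℕ := sInf {n | TransGen (r n) a b}

variable {r} {a b c : α} {n : ℕ}

theorem levelDist_le (h : TransGen (r n) a b) : levelDist r a b ≤ n := Nat.sInf_le h

theorem transGen_of_levelDist_le (hr : Monotone r) (hab : ∃ m, TransGen (r m) a b)
    (hn : levelDist r a b ≤ n) : TransGen (r n) a b :=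
  TransGen.mono (hr hn) _ _ (Nat.sInf_mem hab)

theorem levelDist_le_max (hr : Monotone r) (hab : ∃ m, TransGen (r m) a b)
    (hbc : ∃ m, TransGen (r m) b c) :
    levelDist r a c ≤ max (levelDist r a b) (levelDist r b c) :=
  levelDist_le <| (transGen_of_levelDist_le hr hab (le_max_left _ _)).trans
    (transGen_of_levelDist_le hr hbc (le_max_right _ _))

end LevelDist

theorem exists_normalFn_subadditiveFn_of_levels {kap : Cardinal} (hkap : ℵ₀ < kap)
    (r : ℕ → Ordinal → Ordinal → Prop) (hr : Monotone r)
    (hsmall : ∀ n, ∃ ℓ < lift.{1} kap, ∀ β, #{α | r n α β} ≤ ℓ)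
    (hcover : ∀ α β, α < β → β < (succ kap).ord → ∃ n, r n α β) :
    ∃ d, NormalFn kap d ∧ SubadditiveFn kap d := by
  have hconn : ∀ α β, α < β → β < (succ kap).ord → ∃ n, TransGen (r n) α β :=
    fun α β hαβ hβ => (hcover α β hαβ hβ).imp fun _ => TransGen.single
  refine ⟨levelDist r, fun β hβ n => ?_, fun α β γ hαβ hβγ hγ => ?_⟩
  · obtain ⟨ℓ, hℓ, hbound⟩ := hsmall n
    have hsub : {α | α < β ∧ levelDist r α β ≤ n} ⊆ {α | TransGen (r n) α β} :=
      fun α ⟨hαβ, hle⟩ => transGen_of_levelDist_le hr (hconn α β hαβ hβ) hle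
    calc #{α | α < β ∧ levelDist r α β ≤ n} ≤ #{α | TransGen (r n) α β} := mk_le_mk_of_subset hsub
      _ ≤ max ℵ₀ ℓ := mk_setOf_transGen_le le_sup_left (fun β => (hbound β).trans le_sup_right) β
      _ < lift.{1} kap := max_lt (by simpa using hkap) hℓ
  · exact levelDist_le_max hr (hconn α β hαβ (hβγ.trans hγ)) (hconn β γ hβγ hγ)

theorem Ordinal.exists_seq_of_cof_eq_aleph0 {o : Ordinal} (h : o.cof = ℵ₀) :
    ∃ s : ℕ → Ordinal, Monotone s ∧ (∀ n, s n < o) ∧ ∀ x < o, ∃ n, x < s n := by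
  obtain ⟨f, hf⟩ := exists_isFundamentalSeq (by rw [h, ord_aleph0])
  let s : ℕ → Ordinal := fun n => f ⟨n, natCast_lt_omega0 n⟩
  refine ⟨s, fun m n hmn => hf.strictMono.monotone ?_, fun n => (f _).2, fun x hx => ?_⟩
  · exact Subtype.mk_le_mk.mpr (by exact_mod_cast hmn)
  · obtain ⟨_, ⟨⟨i, hi⟩, rfl⟩, hxi⟩ := hf.isCofinal_range ⟨x, hx⟩
    obtain ⟨m, rfl⟩ := lt_omega0.mp hi
    exact ⟨m + 1, (Subtype.mk_le_mk.mp hxi).trans_lt (hf.strictMono (by simp))⟩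

theorem Ordinal.exists_injOn_Iio_mapsTo_of_card_le {β o : Ordinal} (h : β.card ≤ o.card) :
    ∃ f : Ordinal → Ordinal, InjOn f (Iio β) ∧ MapsTo f (Iio β) (Iio o) := by
  have hmk : #(Iio β) ≤ #(Iio o) := by
    rw [Cardinal.mk_Iio_ordinal, Cardinal.mk_Iio_ordinal]
    exact Cardinal.lift_le.mpr h
  obtain ⟨emb⟩ := hmk
  refine ⟨fun x => if hx : x < β then emb ⟨x, hx⟩ else 0, fun x hx y hy hxy => ?_, fun x hx => ?_⟩
  · simp only [dif_pos (show x < β from hx), dif_pos (show y < β from hy)] at hxy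
    exact congrArg Subtype.val (emb.injective (Subtype.ext hxy))
  · simp only [dif_pos (show x < β from hx)]
    exact (emb ⟨x, hx⟩).2

theorem Cardinal.exists_injOn_Iio_mapsTo_of_lt_ord_succ (kap : Cardinal) :
    ∃ e : Ordinal → Ordinal → Ordinal, (∀ β, InjOn (e β) (Iio β)) ∧
      ∀ β < (succ kap).ord, MapsTo (e β) (Iio β) (Iio kap.ord) := by
  have key : ∀ β, ∃ f : Ordinal → Ordinal,
      InjOn f (Iio β) ∧ (β < (succ kap).ord → MapsTo f (Iio β) (Iio kap.ord)) := fun β => by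
    by_cases hβ : β < (succ kap).ord
    · have hcard : β.card ≤ kap.ord.card := by
        rw [card_ord]
        exact lt_succ_iff.mp (lt_ord.mp hβ)
      obtain ⟨f, hf_inj, hf_maps⟩ := Ordinal.exists_injOn_Iio_mapsTo_of_card_le hcard
      exact ⟨f, hf_inj, fun _ => hf_maps⟩
    · exact ⟨id, injOn_id _, fun h => absurd h hβ⟩
  choose e he using key
  exact ⟨e, fun β => (he β).1, fun β => (he β).2⟩

theorem Cardinal.mk_setOf_lt_and_lt_le_of_injOn {β o : Ordinal.{u}} {e : Ordinal → Ordinal}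
    (he : InjOn e (Iio β)) : #{α | α < β ∧ e α < o} ≤ lift.{u + 1} o.card :=
  calc #{α | α < β ∧ e α < o} = #(e '' {α | α < β ∧ e α < o}) :=
        (mk_image_eq_of_injOn _ _ (he.mono fun _ h => h.1)).symm
    _ ≤ #(Iio o) := mk_le_mk_of_subset (image_subset_iff.mpr fun _ h => h.2)
    _ = lift o.card := mk_Iio_ordinal o

theorem stmt11_general (kap : Cardinal)
    (hcof : kap.ord.cof = Cardinal.aleph0) (hsing : Cardinal.aleph0 < kap) :
    ∃ d : Ordinal → Ordinal → ℕ, NormalFn kap d ∧ SubadditiveFn kap d := by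
  obtain ⟨s, hs_mono, hs_lt, hs_cofinal⟩ := Ordinal.exists_seq_of_cof_eq_aleph0 hcof
  obtain ⟨e, he_inj, he_maps⟩ := exists_injOn_Iio_mapsTo_of_lt_ord_succ kap
  let r : ℕ → Ordinal → Ordinal → Prop := fun n α β => α < β ∧ e β α < s n
  have hr_mono : Monotone r := by
    rintro m n hmn α β ⟨hαβ, hlt⟩
    exact ⟨hαβ, hlt.trans_le (hs_mono hmn)⟩
  have hr_small : ∀ n, ∃ ℓ < lift.{1} kap, ∀ β, #{α | r n α β} ≤ ℓ := fun n =>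
    ⟨lift (s n).card, lift_lt.mpr (lt_ord.mp (hs_lt n)),
      fun β => mk_setOf_lt_and_lt_le_of_injOn (he_inj β)⟩
  have hr_cover : ∀ α β, α < β → β < (succ kap).ord → ∃ n, r n α β := fun α β hαβ hβ =>
    (hs_cofinal _ (he_maps β hβ hαβ)).imp fun _ hn => ⟨hαβ, hn⟩
  exact exists_normalFn_subadditiveFn_of_levels hsing r hr_mono hr_small hr_cover

/-- If κ is a singular strong limit cardinal of countable cofinality, then there exists a
normal, subadditive function d : [κ⁺]² → ω. -/
theorem stmt11 (kap : Cardinal) (hsl : kap.IsStrongLimit)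
    (hcof : kap.ord.cof = Cardinal.aleph0) (hsing : Cardinal.aleph0 < kap) :
    ∃ d : Ordinal → Ordinal → ℕ, NormalFn kap d ∧ SubadditiveFn kap d :=
  stmt11_general kap hcof hsing
end

section
/- Let λ be regular uncountable and suppose 𝕊 * 𝕋̇ is a two-step iteration such that the set of pairs (s, ṫ) for which there exists t* in the ground model with s ⊩ ṫ = t* is dense in 𝕊 * 𝕋̇ and is λ-closed. Then 𝕊 is λ-distributive and ⊩_𝕊 "𝕋̇ is λ-distributive". -/
/-!
Below any condition one builds, by transfinite recursion along fewer than `λ` steps, a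
descending sequence inside the closed dense set `D` that enters the given dense open sets one
after another; a lower bound of the whole sequence meets all of them, so `𝕊 * 𝕋̇` is
`λ`-distributive. Distributivity passes to `𝕊` through the projection, since preimages of dense
open sets are dense open. In the quotient, the conditions `π q` with `q` below `p` in all the
given dense open sets are dense below `π p`, so a generic filter containing `π p` meets them.
-/

def DenseOpen {P : Type} [Preorder P] (D : Set P) : Prop :=
  (∀ p : P, ∃ q ∈ D, q ≤ p) ∧ ∀ p ∈ D, ∀ q : P, q ≤ p → q ∈ D

/-- A forcing poset is λ-distributive if the intersection of fewer than λ dense open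
subsets is dense open. -/
def IsDistrib (P : Type) [Preorder P] (μ : Cardinal) : Prop :=
  ∀ (ι : Type) (D : ι → Set P), Cardinal.mk ι < μ →
    (∀ i, DenseOpen (D i)) → DenseOpen (⋂ i, D i)

open Cardinal Ordinal Set

section Closed

variable {P : Type} [Preorder P]

def IsLambdaClosed (D : Set P) (lam : Cardinal) : Prop :=
  ∀ β < lam.ord, ∀ f : Ordinal → P,
    (∀ γ < β, f γ ∈ D) → (∀ γ δ : Ordinal, γ ≤ δ → δ < β → f δ ≤ f γ) →
    ∃ q ∈ D, ∀ γ < β, q ≤ f γ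

theorem isDistrib_of_exists_le {lam : Cardinal}
    (h : ∀ (ι : Type) (F : ι → Set P), #ι < lam → (∀ i, DenseOpen (F i)) →
      ∀ p : P, ∃ q ≤ p, ∀ i, q ∈ F i) :
    IsDistrib P lam := fun ι F hι hF =>
  ⟨fun p => (h ι F hι hF p).imp fun _ ⟨hqp, hqF⟩ => ⟨mem_iInter.2 hqF, hqp⟩,
    fun _ hp q hqp => mem_iInter.2 fun i => (hF i).2 _ (mem_iInter.1 hp i) q hqp⟩

theorem DenseOpen.exists_mem_le {D F : Set P} (hD : ∀ p : P, ∃ q ∈ D, q ≤ p)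
    (hF : DenseOpen F) (p : P) : ∃ q ∈ D, q ∈ F ∧ q ≤ p := by
  obtain ⟨t, htF, htp⟩ := hF.1 p
  obtain ⟨q, hqD, hqt⟩ := hD t
  exact ⟨q, hqD, hF.2 t htF q hqt, hqt.trans htp⟩

namespace IsLambdaClosed

variable {D : Set P} {lam : Cardinal}

theorem exists_le_of_le (hcl : IsLambdaClosed D lam) {p : P} (hp : p ∈ D) {β : Ordinal}
    (hβ : β < lam.ord) (f : Ordinal → P) (hfD : ∀ γ < β, f γ ∈ D)
    (hf : ∀ δ < β, ∀ γ < δ, f δ ≤ f γ) (hfp : ∀ γ < β, f γ ≤ p) :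
    ∃ q ∈ D, q ≤ p ∧ ∀ γ < β, q ≤ f γ := by
  rcases eq_zero_or_pos β with rfl | hβ0
  · exact ⟨p, hp, le_rfl, fun γ hγ => (not_lt_zero hγ).elim⟩
  have hanti : ∀ γ δ : Ordinal, γ ≤ δ → δ < β → f δ ≤ f γ := fun γ δ hγδ hδ =>
    hγδ.eq_or_lt.elim (fun h => h ▸ le_rfl) (hf δ hδ γ)
  obtain ⟨q, hqD, hq⟩ := hcl β hβ f hfD hanti
  exact ⟨q, hqD, (hq 0 hβ0).trans (hfp 0 hβ0), hq⟩

theorem exists_le_forall_lt_mem (hD : ∀ p : P, ∃ q ∈ D, q ≤ p) (hcl : IsLambdaClosed D lam)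
    {b : Ordinal} (hb : b < lam.ord) (F : Ordinal → Set P) (hF : ∀ γ < b, DenseOpen (F γ))
    (p : P) : ∃ q ≤ p, ∀ γ < b, q ∈ F γ := by
  classical
  obtain ⟨p₀, hp₀D, hp₀p⟩ := hD p
  let f : Ordinal → P := wellFounded_lt.fix fun β ih =>
    if h : ∃ q ∈ D, q ≤ p₀ ∧ (∀ γ (hγ : γ < β), q ≤ ih γ hγ) ∧ q ∈ F β then h.choose else p₀
  have hf_eq : ∀ β, f β =
      if h : ∃ q ∈ D, q ≤ p₀ ∧ (∀ γ < β, q ≤ f γ) ∧ q ∈ F β then h.choose else p₀ :=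
    fun β => wellFounded_lt.fix_eq _ β
  have hf : ∀ β < b, f β ∈ D ∧ f β ≤ p₀ ∧ (∀ γ < β, f β ≤ f γ) ∧ f β ∈ F β := by
    intro β
    induction β using WellFoundedLT.induction with
    | _ β ih =>
      intro hβ
      have hlt : ∀ γ < β, γ < b := fun γ hγ => hγ.trans hβ
      obtain ⟨r, hrD, hrp₀, hrf⟩ := hcl.exists_le_of_le hp₀D (hβ.trans hb) f
        (fun γ hγ => (ih γ hγ (hlt γ hγ)).1) (fun δ hδ => (ih δ hδ (hlt δ hδ)).2.2.1)
        (fun γ hγ => (ih γ hγ (hlt γ hγ)).2.1)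
      obtain ⟨q, hqD, hqF, hqr⟩ := (hF β hβ).exists_mem_le hD r
      have hex : ∃ q ∈ D, q ≤ p₀ ∧ (∀ γ < β, q ≤ f γ) ∧ q ∈ F β :=
        ⟨q, hqD, hqr.trans hrp₀, fun γ hγ => hqr.trans (hrf γ hγ), hqF⟩
      rw [hf_eq β, dif_pos hex]
      exact hex.choose_spec
  obtain ⟨q, -, hqp₀, hqf⟩ := hcl.exists_le_of_le hp₀D hb f (fun γ hγ => (hf γ hγ).1)
    (fun δ hδ => (hf δ hδ).2.2.1) (fun γ hγ => (hf γ hγ).2.1)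
  exact ⟨q, hqp₀.trans hp₀p, fun γ hγ => (hF γ hγ).2 _ (hf γ hγ).2.2.2 q (hqf γ hγ)⟩

theorem isDistrib (hD : ∀ p : P, ∃ q ∈ D, q ≤ p) (hcl : IsLambdaClosed D lam) :
    IsDistrib P lam := by
  refine isDistrib_of_exists_le fun ι F hι hF p => ?_
  let r := WellOrderingRel (α := ι)
  have hr : type r < lam.ord := lt_ord.2 ((card_type r).symm ▸ hι)
  let F' : Ordinal → Set P := fun γ => if h : γ < type r then F (enum r ⟨γ, h⟩) else univ
  have hF' : ∀ γ, (h : γ < type r) → F' γ = F (enum r ⟨γ, h⟩) := fun γ h => dif_pos h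
  obtain ⟨q, hqp, hq⟩ := hcl.exists_le_forall_lt_mem hD hr F'
    (fun γ hγ => hF' γ hγ ▸ hF _) p
  refine ⟨q, hqp, fun i => ?_⟩
  simpa only [hF' _ (typein_lt_type r i), enum_typein] using hq _ (typein_lt_type r i)

end IsLambdaClosed

end Closed

structure IsGeneric {S : Type} [Preorder S] (G : Set S) : Prop where
  mem_of_le : ∀ s ∈ G, ∀ s' : S, s ≤ s' → s' ∈ G
  exists_le_le : ∀ s₁ ∈ G, ∀ s₂ ∈ G, ∃ s₃ ∈ G, s₃ ≤ s₁ ∧ s₃ ≤ s₂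
  inter_nonempty : ∀ E : Set S, (∀ s : S, ∃ t ∈ E, t ≤ s) → (G ∩ E).Nonempty

theorem IsGeneric.inter_nonempty_of_dense_below {S : Type} [Preorder S] {G : Set S}
    (hG : IsGeneric G) {s : S} (hs : s ∈ G) {E : Set S} (hE : ∀ t ≤ s, ∃ u ∈ E, u ≤ t) :
    (G ∩ E).Nonempty := by
  -- add the conditions incompatible with `s`, to make `E` dense everywhere
  let E' := E ∪ {t | ∀ u ≤ t, ¬ u ≤ s}
  have hE' : ∀ t : S, ∃ u ∈ E', u ≤ t := by
    intro t
    by_cases h : ∃ u ≤ t, u ≤ s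
    · obtain ⟨u, hut, hus⟩ := h
      obtain ⟨v, hvE, hvu⟩ := hE u hus
      exact ⟨v, Or.inl hvE, hvu.trans hut⟩
    · exact ⟨t, Or.inr fun u hut hus => h ⟨u, hut, hus⟩, le_rfl⟩
  obtain ⟨g, hgG, hgE | hg⟩ := hG.inter_nonempty E' hE'
  · exact ⟨g, hgG, hgE⟩
  · obtain ⟨u, -, hug, hus⟩ := hG.exists_le_le g hgG s hs
    exact absurd hus (hg u hug)

section Projection

variable {P S : Type} [Preorder P] [Preorder S] {π : P → S}

theorem DenseOpen.preimage (hmono : Monotone π)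
    (hproj : ∀ p : P, ∀ s : S, s ≤ π p → ∃ q : P, q ≤ p ∧ π q ≤ s) {E : Set S}
    (hE : DenseOpen E) : DenseOpen (π ⁻¹' E) := by
  refine ⟨fun p => ?_, fun p hp q hqp => hE.2 _ hp _ (hmono hqp)⟩
  obtain ⟨s, hsE, hs⟩ := hE.1 (π p)
  obtain ⟨q, hqp, hqs⟩ := hproj p s hs
  exact ⟨q, hE.2 s hsE (π q) hqs, hqp⟩

theorem IsDistrib.of_surjective {lam : Cardinal} (hP : IsDistrib P lam) (hmono : Monotone π)
    (hproj : ∀ p : P, ∀ s : S, s ≤ π p → ∃ q : P, q ≤ p ∧ π q ≤ s)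
    (hsurj : Function.Surjective π) : IsDistrib S lam := by
  refine isDistrib_of_exists_le fun ι E hι hE s => ?_
  obtain ⟨p, rfl⟩ := hsurj s
  obtain ⟨q, hq, hqp⟩ := (hP ι _ hι fun i => (hE i).preimage hmono hproj).1 p
  exact ⟨π q, hmono hqp, fun i => mem_iInter.1 hq i⟩

theorem IsDistrib.exists_le_of_isGeneric {lam : Cardinal} (hP : IsDistrib P lam)
    (hmono : Monotone π) (hproj : ∀ p : P, ∀ s : S, s ≤ π p → ∃ q : P, q ≤ p ∧ π q ≤ s) {G : Set S}
    (hG : IsGeneric G) {ι : Type} {F : ι → Set P} (hι : #ι < lam) (hF : ∀ i, DenseOpen (F i))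
    {p : P} (hp : π p ∈ G) : ∃ q : P, q ≤ p ∧ π q ∈ G ∧ ∀ i, q ∈ F i := by
  let E : Set S := {s | ∃ q ≤ p, s ≤ π q ∧ ∀ i, q ∈ F i}
  have hE : ∀ t ≤ π p, ∃ u ∈ E, u ≤ t := by
    intro t ht
    obtain ⟨q₀, hq₀p, hq₀t⟩ := hproj p t ht
    obtain ⟨q, hq, hqq₀⟩ := (hP ι F hι hF).1 q₀
    exact ⟨π q, ⟨q, hqq₀.trans hq₀p, le_rfl, mem_iInter.1 hq⟩, (hmono hqq₀).trans hq₀t⟩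
  obtain ⟨s, hsG, q, hqp, hsq, hqF⟩ := hG.inter_nonempty_of_dense_below hp hE
  exact ⟨q, hqp, hG.mem_of_le s hsG _ hsq, hqF⟩

end Projection

theorem stmt16_general (lam : Cardinal)
    (P S : Type) [Preorder P] [Preorder S]
    (π : P → S) (hπmono : Monotone π)
    (hπproj : ∀ p : P, ∀ s : S, s ≤ π p → ∃ q : P, q ≤ p ∧ π q ≤ s)
    (hπsurj : Function.Surjective π)
    (D : Set P)
    (hDdense : ∀ p : P, ∃ q ∈ D, q ≤ p)
    (hDclosed : ∀ β < lam.ord, ∀ f : Ordinal → P,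
      (∀ γ < β, f γ ∈ D) → (∀ γ δ : Ordinal, γ ≤ δ → δ < β → f δ ≤ f γ) →
      ∃ q ∈ D, ∀ γ < β, q ≤ f γ) :
    IsDistrib S lam ∧
    (∀ G : Set S,
      (∀ s ∈ G, ∀ s' : S, s ≤ s' → s' ∈ G) →
      (∀ s₁ ∈ G, ∀ s₂ ∈ G, ∃ s₃ ∈ G, s₃ ≤ s₁ ∧ s₃ ≤ s₂) →
      (∀ E : Set S, (∀ s : S, ∃ t ∈ E, t ≤ s) → (G ∩ E).Nonempty) →
      ∀ (ι : Type) (F : ι → Set P), Cardinal.mk ι < lam → (∀ i, DenseOpen (F i)) →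
        ∀ p : P, π p ∈ G → ∃ q : P, q ≤ p ∧ π q ∈ G ∧ ∀ i, q ∈ F i) := by
  have hP : IsDistrib P lam := IsLambdaClosed.isDistrib hDdense hDclosed
  exact ⟨hP.of_surjective hπmono hπproj hπsurj,
    fun G hGup hGdir hGgen ι F hι hF p hp =>
      hP.exists_le_of_isGeneric hπmono hπproj ⟨hGup, hGdir, hGgen⟩ hι hF hp⟩

/-- Let λ be regular uncountable and let P = 𝕊 * 𝕋̇ be a two-step iteration, presented as
a poset P with a projection π onto 𝕊 (here S), such that the set D of conditions (s, ṫ)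
whose second coordinate is decided (s ⊩ ṫ = t* for some ground-model t*) is dense in P
and λ-closed.  Then 𝕊 is λ-distributive, and 𝕊 forces 𝕋̇ to be λ-distributive: for every
𝕊-generic filter G, fewer than λ many (ground-model-coded) dense open subsets of the
quotient 𝕋 can be simultaneously met below any condition of the quotient. -/
theorem stmt16 (lam : Cardinal) (hreg : lam.IsRegular) (hunc : Cardinal.aleph0 < lam)
    (P S : Type) [Preorder P] [Preorder S] [OrderTop P] [OrderTop S]
    (π : P → S) (hπmono : Monotone π) (hπtop : π ⊤ = ⊤)
    (hπproj : ∀ p : P, ∀ s : S, s ≤ π p → ∃ q : P, q ≤ p ∧ π q ≤ s)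
    (hπsurj : Function.Surjective π)
    (D : Set P)
    (hDdense : ∀ p : P, ∃ q ∈ D, q ≤ p)
    (hDclosed : ∀ β < lam.ord, ∀ f : Ordinal → P,
      (∀ γ < β, f γ ∈ D) → (∀ γ δ : Ordinal, γ ≤ δ → δ < β → f δ ≤ f γ) →
      ∃ q ∈ D, ∀ γ < β, q ≤ f γ) :
    IsDistrib S lam ∧
    (∀ G : Set S,
      (∀ s ∈ G, ∀ s' : S, s ≤ s' → s' ∈ G) →
      (∀ s₁ ∈ G, ∀ s₂ ∈ G, ∃ s₃ ∈ G, s₃ ≤ s₁ ∧ s₃ ≤ s₂) →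
      (∀ E : Set S, (∀ s : S, ∃ t ∈ E, t ≤ s) → (G ∩ E).Nonempty) →
      ∀ (ι : Type) (F : ι → Set P), Cardinal.mk ι < lam → (∀ i, DenseOpen (F i)) →
        ∀ p : P, π p ∈ G → ∃ q : P, q ≤ p ∧ π q ∈ G ∧ ∀ i, q ∈ F i) :=
  stmt16_general lam P S π hπmono hπproj hπsurj D hDdense hDclosed
end
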